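/- Let G be a finite simple graph and let V1, ..., Vm (m ≥ 1) be vertex subsets of G such that each Vi induces a maximal clique of G, every edge of G has both endpoints in some single Vi, and every vertex of G lies in some Vi (so {V1,...,Vm} is an edge clique cover of G by maximal cliques also covering all vertices). Let L = V1 ∩ V2 ∩ ... ∩ Vm, and for each nonempty proper subset S ⊊ {1,...,m} let n_S be the number of vertices v of G such that v ∈ Vi exactly for those i ∈ S. Then (|V(G)| − |L|) · dim G = Σ_{∅ ≠ S ⊊ {1,...,m}} n_S · dim G[∪_{i∈S} Vi], where G[∪_{i∈S} Vi] denotes the subgraph of G induced on the union of the Vi with i ∈ S. -/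

import Mathlib

open Classical in
/-- The Knill inductive dimension of the subgraph of `G` induced on the
finite vertex set `A`: the empty graph has dimension `-1`, and otherwise
`dim = (1/|A|) · Σ_{v ∈ A} (1 + dim S(v))`, where the sphere `S(v)` is the
induced subgraph on the neighbors of `v` inside `A`. -/
noncomputable def gdim {V : Type*} (G : SimpleGraph V) (A : Finset V) : ℚ :=
  if A.card = 0 then -1
  else (A.card : ℚ)⁻¹ *
    ∑ v ∈ A.attach, (1 + gdim G (A.filter (fun u => G.Adj v.1 u)))
termination_by A.card
decreasing_by
  apply Finset.card_lt_card
  refine ⟨Finset.filter_subset _ _, fun hsub => ?_⟩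
  have hv := hsub v.2
  rw [Finset.mem_filter] at hv
  exact G.irrefl hv.2

open Classical in
lemma gdim_sum {V : Type*} (G : SimpleGraph V) (B : Finset V) :
    ∑ u ∈ B, (1 + gdim G (B.filter (fun w => G.Adj u w))) = (B.card : ℚ) * gdim G B := by
  rcases eq_or_ne B.card 0 with h | h
  · rw [Finset.card_eq_zero] at h
    subst h; simp
  · rw [gdim, if_neg h,
      ← Finset.sum_attach B (fun u => 1 + gdim G (B.filter (fun w => G.Adj u w)))]
    rw [← mul_assoc, mul_inv_cancel₀ (by exact_mod_cast h), one_mul]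

open Classical in
lemma gdim_cone {V : Type*} [DecidableEq V] (G : SimpleGraph V) (v : V) (A : Finset V)
    (hv : v ∈ A) (hcone : ∀ u ∈ A, u ≠ v → G.Adj v u) :
    gdim G A = 1 + gdim G (A.erase v) := by
  have hcard : A.card ≠ 0 := Finset.card_ne_zero_of_mem hv
  rw [gdim, if_neg hcard,
    Finset.sum_attach A (fun u => 1 + gdim G (A.filter (fun w => G.Adj u w))),
    ← Finset.add_sum_erase A _ hv]
  have hAv : A.filter (fun w => G.Adj v w) = A.erase v := by
    ext w
    simp only [Finset.mem_filter, Finset.mem_erase]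
    exact ⟨fun ⟨hw, hadj⟩ => ⟨hadj.ne', hw⟩, fun ⟨hne, hw⟩ => ⟨hw, hcone w hw hne⟩⟩
  have hrec : ∀ u ∈ A.erase v,
      (1 : ℚ) + gdim G (A.filter (fun w => G.Adj u w)) =
        2 + gdim G ((A.erase v).filter (fun w => G.Adj u w)) := by
    intro u hu
    rw [Finset.mem_erase] at hu
    have huv : G.Adj v u := hcone u hu.2 hu.1
    have hvC : v ∈ A.filter (fun w => G.Adj u w) :=
      Finset.mem_filter.2 ⟨hv, huv.symm⟩
    have hconeC : ∀ w ∈ A.filter (fun w => G.Adj u w), w ≠ v → G.Adj v w := by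
      intro w hw hwv
      exact hcone w (Finset.mem_filter.1 hw).1 hwv
    have := gdim_cone G v (A.filter (fun w => G.Adj u w)) hvC hconeC
    rw [this]
    have : (A.filter (fun w => G.Adj u w)).erase v =
        (A.erase v).filter (fun w => G.Adj u w) := by
      ext w
      simp only [Finset.mem_filter, Finset.mem_erase]
      tauto
    rw [this]; ring
  rw [Finset.sum_congr rfl hrec, hAv]
  have hsplit : ∀ u ∈ A.erase v,
      (2 : ℚ) + gdim G ((A.erase v).filter (fun w => G.Adj u w)) =
        1 + (1 + gdim G ((A.erase v).filter (fun w => G.Adj u w))) := by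
    intro u _; ring
  rw [Finset.sum_congr rfl hsplit, Finset.sum_add_distrib, Finset.sum_const,
    gdim_sum G (A.erase v)]
  have hk : ((A.erase v).card : ℚ) + 1 = (A.card : ℚ) := by
    exact_mod_cast Finset.card_erase_add_one hv
  have hcQ : (A.card : ℚ) ≠ 0 := by exact_mod_cast hcard
  field_simp
  rw [nsmul_eq_mul, mul_one, ← hk]; ring
termination_by A.card
decreasing_by
  apply Finset.card_lt_card
  refine ⟨Finset.filter_subset _ _, fun hsub => ?_⟩
  have := Finset.mem_filter.1 (hsub (Finset.mem_erase.1 hu).2)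
  exact G.irrefl this.2

/-- Let `W 0, …, W (m-1)` (m ≥ 1) be vertex subsets of `G`,
each inducing a maximal clique, covering every edge and every vertex of `G`
(an edge clique cover by maximal cliques also covering all vertices). Let
`L` be their common intersection, and for a nonempty proper subset
`S ⊊ {1,…,m}` let `n_S` be the number of vertices lying in `W i` exactly
for the `i ∈ S`. Then
`(|V(G)| − |L|) · dim G = Σ_{∅ ≠ S ⊊ {1,…,m}} n_S · dim G[∪_{i∈S} W i]`. -/
theorem dim_from_clique_cover {V : Type*} [Fintype V] [DecidableEq V]
    (G : SimpleGraph V) (m : ℕ) (hm : 1 ≤ m) (W : Fin m → Finset V)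
    (hclique : ∀ i, G.IsClique (W i : Set V))
    (hmaximal : ∀ i, ∀ t : Finset V, G.IsClique (t : Set V) → W i ⊆ t → t = W i)
    (hedge : ∀ a b, G.Adj a b → ∃ i, a ∈ W i ∧ b ∈ W i)
    (hvertex : ∀ v : V, ∃ i, v ∈ W i)
    (L : Finset V) (hL : ∀ v, v ∈ L ↔ ∀ i, v ∈ W i) :
    ((Fintype.card V : ℚ) - (L.card : ℚ)) * gdim G Finset.univ =
      ∑ S ∈ Finset.univ.powerset.filter
          (fun S : Finset (Fin m) => S.Nonempty ∧ S ≠ Finset.univ),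
        ((Finset.univ.filter (fun v : V => ∀ i, v ∈ W i ↔ i ∈ S)).card : ℚ) *
          gdim G (S.biUnion W) := by
  classical
  -- index set of a vertex
  set Sv : V → Finset (Fin m) := fun v => Finset.univ.filter (fun i => v ∈ W i) with hSv
  -- the cone identity for each vertex
  have key : ∀ v : V, gdim G ((Sv v).biUnion W) =
      1 + gdim G (Finset.univ.filter (fun u => G.Adj v u)) := by
    intro v
    obtain ⟨i₀, hi₀⟩ := hvertex v
    have hvB : v ∈ (Sv v).biUnion W :=
      Finset.mem_biUnion.2 ⟨i₀, Finset.mem_filter.2 ⟨Finset.mem_univ _, hi₀⟩, hi₀⟩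
    have hconeB : ∀ u ∈ (Sv v).biUnion W, u ≠ v → G.Adj v u := by
      intro u hu hne
      obtain ⟨i, hi, hui⟩ := Finset.mem_biUnion.1 hu
      have hvi : v ∈ W i := (Finset.mem_filter.1 hi).2
      exact hclique i hvi hui (Ne.symm hne)
    have herase : ((Sv v).biUnion W).erase v =
        Finset.univ.filter (fun u => G.Adj v u) := by
      ext u
      simp only [Finset.mem_erase, Finset.mem_filter, Finset.mem_univ, true_and]
      constructor
      · rintro ⟨hne, hu⟩
        exact hconeB u hu hne
      · intro hadj
        obtain ⟨i, hvi, hui⟩ := hedge v u hadj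
        exact ⟨hadj.ne', Finset.mem_biUnion.2
          ⟨i, Finset.mem_filter.2 ⟨Finset.mem_univ _, hvi⟩, hui⟩⟩
    rw [gdim_cone G v _ hvB hconeB, herase]
  -- for v ∈ L: the full union is univ and the sphere identity gives gdim univ
  have hLkey : ∀ v ∈ L, gdim G (Finset.univ : Finset V) =
      1 + gdim G (Finset.univ.filter (fun u => G.Adj v u)) := by
    intro v hv
    have hSvL : Sv v = Finset.univ := by
      ext i
      simp [hSv, (hL v).1 hv i]
    have hbU : (Finset.univ : Finset (Fin m)).biUnion W = Finset.univ := by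
      ext u
      simp only [Finset.mem_biUnion, Finset.mem_univ, true_and, iff_true]
      exact hvertex u
    have := key v
    rwa [hSvL, hbU] at this
  -- total sphere sum
  have htot : ∑ v : V, (1 + gdim G (Finset.univ.filter (fun u => G.Adj v u))) =
      (Fintype.card V : ℚ) * gdim G Finset.univ := by
    have := gdim_sum G (Finset.univ : Finset V)
    simpa [Finset.card_univ] using this
  have hLsub : L ⊆ Finset.univ := Finset.subset_univ L
  have hLsum : ∑ v ∈ L, (1 + gdim G (Finset.univ.filter (fun u => G.Adj v u))) =
      (L.card : ℚ) * gdim G Finset.univ := by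
    rw [Finset.sum_congr rfl (fun v hv => (hLkey v hv).symm), Finset.sum_const,
      nsmul_eq_mul]
  have hLHS : ((Fintype.card V : ℚ) - (L.card : ℚ)) * gdim G Finset.univ =
      ∑ v ∈ Finset.univ \ L, gdim G ((Sv v).biUnion W) := by
    rw [Finset.sum_congr rfl (fun v _ => key v), Finset.sum_sdiff_eq_sub hLsub,
      htot, hLsum]
    ring
  rw [hLHS]
  -- fiberwise regrouping
  have hmaps : ∀ v ∈ Finset.univ \ L, Sv v ∈ Finset.univ.powerset.filter
      (fun S : Finset (Fin m) => S.Nonempty ∧ S ≠ Finset.univ) := by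
    intro v hv
    rw [Finset.mem_sdiff] at hv
    obtain ⟨i₀, hi₀⟩ := hvertex v
    refine Finset.mem_filter.2 ⟨Finset.mem_powerset.2 (Finset.subset_univ _), ?_, ?_⟩
    · exact ⟨i₀, Finset.mem_filter.2 ⟨Finset.mem_univ _, hi₀⟩⟩
    · intro hSu
      apply hv.2
      rw [hL]
      intro i
      have : i ∈ Sv v := hSu ▸ Finset.mem_univ i
      exact (Finset.mem_filter.1 this).2
  rw [← Finset.sum_fiberwise_of_maps_to hmaps (fun v => gdim G ((Sv v).biUnion W))]
  refine Finset.sum_congr rfl ?_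
  intro S hS
  rw [Finset.mem_filter] at hS
  have hfib : (Finset.univ \ L).filter (fun v => Sv v = S) =
      Finset.univ.filter (fun v : V => ∀ i, v ∈ W i ↔ i ∈ S) := by
    ext v
    simp only [Finset.mem_filter, Finset.mem_sdiff, Finset.mem_univ, true_and]
    constructor
    · rintro ⟨-, hv⟩
      intro i
      rw [← hv]
      simp [hSv]
    · intro hv
      have hSveq : Sv v = S := by
        ext i
        simp only [hSv, Finset.mem_filter, Finset.mem_univ, true_and]
        exact hv i
      refine ⟨?_, hSveq⟩
      intro hvL
      apply hS.2.2
      ext i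
      simp only [Finset.mem_univ, iff_true]
      exact (hv i).1 ((hL v).1 hvL i)
  have hconst : ∀ v ∈ (Finset.univ \ L).filter (fun v => Sv v = S),
      gdim G ((Sv v).biUnion W) = gdim G (S.biUnion W) := by
    intro v hv
    rw [(Finset.mem_filter.1 hv).2]
  rw [Finset.sum_congr rfl hconst, Finset.sum_const, hfib, nsmul_eq_mul]
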